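/- For every rooted tree t with n vertices, the number of increasing labellings of t equals n! divided by the product of the hook lengths of all vertices of t: #L(t) = n!/∏_{v∈t} h_v. -/

import Mathlib

/-- Rooted trees: a root together with a (possibly empty) list of subtrees. -/
inductive RTree : Type
  | node : List RTree → RTree

/-- The number of vertices of a rooted tree. -/
def RTree.size : RTree → ℕ
  | .node ts => 1 + (ts.attach.map (fun x => RTree.size x.1)).sum
decreasing_by simp only [RTree.node.sizeOf_spec]; have := List.sizeOf_lt_of_mem x.2; omega

/-- The product of the hook lengths of all vertices of a rooted tree, where the hook
length of a vertex is the number of its descendants (including itself). -/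
def RTree.hookProd : RTree → ℕ
  | .node ts => (RTree.node ts).size * (ts.attach.map (fun x => RTree.hookProd x.1)).prod
decreasing_by simp only [RTree.node.sizeOf_spec]; have := List.sizeOf_lt_of_mem x.2; omega

/-- Labelled rooted trees: every vertex carries a natural number label. -/
inductive LRTree : Type
  | node : ℕ → List LRTree → LRTree

/-- The underlying (unlabelled) shape of a labelled rooted tree. -/
def LRTree.shape : LRTree → RTree
  | .node _ ts => .node (ts.attach.map (fun x => LRTree.shape x.1))
decreasing_by simp only [LRTree.node.sizeOf_spec]; have := List.sizeOf_lt_of_mem x.2; omega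

/-- The multiset of labels of a labelled rooted tree. -/
def LRTree.labels : LRTree → Multiset ℕ
  | .node a ts => a ::ₘ (ts.attach.map (fun x => LRTree.labels x.1)).sum
decreasing_by simp only [LRTree.node.sizeOf_spec]; have := List.sizeOf_lt_of_mem x.2; omega

/-- A labelled rooted tree is increasing if the label of each vertex is smaller than
the labels of all its descendants. -/
inductive LRTree.Increasing : LRTree → Prop
  | node (a : ℕ) (ts : List LRTree) :
      (∀ t ∈ ts, ∀ b ∈ t.labels, a < b) →
      (∀ t ∈ ts, t.Increasing) →
      LRTree.Increasing (.node a ts)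

/-! An increasing labelling of a tree `t` by a label set `S` with `t.size` elements puts `min S`
at the root and distributes the remaining labels among the subtrees, a subset of size
`tᵢ.size` to the `i`-th subtree, each then labelled increasingly. Enumerating labellings this
way for arbitrary finite `S` and counting by induction, the choice of the subsets contributes a
multinomial coefficient, which cancels against the subtrees' factorials, and the root's hook
`t.size` turns `(t.size - 1)!` into `t.size!`. -/

theorem Multiset.mem_list_sum {α : Type*} {a : α} (L : List (Multiset α)) :
    a ∈ L.sum ↔ ∃ m ∈ L, a ∈ m := by
  induction L with
  | nil => simp
  | cons m L ih => simp [ih]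

theorem Multiset.card_list_sum {α : Type*} (L : List (Multiset α)) :
    card L.sum = (L.map card).sum := by
  induction L with
  | nil => simp
  | cons m L ih => simp [ih]

theorem Finset.val_eq_cons_and_lt_iff {α : Type*} [LinearOrder α] {S : Finset α} {a : α}
    {M : Multiset α} :
    (S.val = a ::ₘ M ∧ ∀ b ∈ M, a < b) ↔
      ∃ h : S.Nonempty, S.min' h = a ∧ (S.erase a).val = M := by
  constructor
  · rintro ⟨hS, hlt⟩
    have ha : a ∈ S := by simp [← Finset.mem_val, hS]
    have hmin : S.min' ⟨a, ha⟩ = a := by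
      refine le_antisymm (S.min'_le a ha) (Finset.le_min' _ _ _ fun b hb => ?_)
      rw [← Finset.mem_val, hS, Multiset.mem_cons] at hb
      rcases hb with rfl | hb
      exacts [le_rfl, (hlt b hb).le]
    exact ⟨⟨a, ha⟩, hmin, by rw [Finset.erase_val, hS, Multiset.erase_cons_head]⟩
  · rintro ⟨h, rfl, rfl⟩
    refine ⟨?_, fun b hb => S.min'_lt_of_mem_erase_min' h hb⟩
    rw [Finset.erase_val, Multiset.cons_erase (S.min'_mem h)]

theorem Finset.val_eq_add_iff {α : Type*} [DecidableEq α] {S : Finset α} {X Y : Multiset α} :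
    S.val = X + Y ↔ ∃ A ⊆ S, A.val = X ∧ (S \ A).val = Y := by
  constructor
  · intro hS
    have hX : X ≤ S.val := hS ▸ Multiset.le_add_right X Y
    refine ⟨⟨X, Multiset.nodup_of_le hX S.nodup⟩, Finset.val_le_iff.1 hX, rfl, ?_⟩
    change S.val - X = Y
    rw [hS, add_tsub_cancel_left]
  · rintro ⟨A, hA, rfl, rfl⟩
    rw [Finset.sdiff_val, add_tsub_cancel_of_le (Finset.val_le_iff.2 hA)]

theorem List.cons_uncurry_injective {α : Type*} :
    Function.Injective fun p : α × List α => p.1 :: p.2 :=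
  fun _ _ h => Prod.ext (List.cons.inj h).1 (List.cons.inj h).2

namespace RTree

theorem size_node (ts : List RTree) : (node ts).size = 1 + (ts.map size).sum := by
  rw [size, List.attach_map_val (f := size)]

theorem hookProd_node (ts : List RTree) :
    (node ts).hookProd = (node ts).size * (ts.map hookProd).prod := by
  rw [hookProd, List.attach_map_val (f := hookProd)]

end RTree

namespace LRTree

theorem shape_node (a : ℕ) (ls : List LRTree) :
    (node a ls).shape = .node (ls.map shape) := by
  rw [shape, List.attach_map_val (f := shape)]

theorem labels_node (a : ℕ) (ls : List LRTree) :
    (node a ls).labels = a ::ₘ (ls.map labels).sum := by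
  rw [labels, List.attach_map_val (f := labels)]

theorem card_labels : ∀ l : LRTree, Multiset.card l.labels = l.shape.size
  | .node a ls => by
    have ih : ∀ l ∈ ls, (Multiset.card ∘ labels) l = (RTree.size ∘ shape) l :=
      fun l _ => card_labels l
    rw [labels_node, shape_node, RTree.size_node, Multiset.card_cons,
      Multiset.card_list_sum, List.map_map, List.map_map, List.map_congr_left ih]
    omega

theorem increasing_node_iff (a : ℕ) (ls : List LRTree) :
    (node a ls).Increasing ↔
      (∀ b ∈ (ls.map labels).sum, a < b) ∧ ∀ l ∈ ls, l.Increasing := by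
  simp only [Multiset.mem_list_sum, List.mem_map]
  constructor
  · rintro ⟨_, _, hlt, hinc⟩
    exact ⟨fun b ⟨_, ⟨l, hl, hm⟩, hb⟩ => hlt l hl b (hm ▸ hb), hinc⟩
  · rintro ⟨hlt, hinc⟩
    exact .node a ls (fun l hl b hb => hlt b ⟨_, ⟨l, hl, rfl⟩, hb⟩) hinc

noncomputable instance : DecidableEq LRTree := Classical.decEq _

end LRTree

namespace RTree

open LRTree Nat

mutual
noncomputable def labellings : RTree → Finset ℕ → Finset LRTree
  | .node ts, S =>
    if h : S.Nonempty then
      (forestLabellings ts (S.erase (S.min' h))).image (LRTree.node (S.min' h))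
    else ∅

noncomputable def forestLabellings : List RTree → Finset ℕ → Finset (List LRTree)
  | [], S => if S = ∅ then {[]} else ∅
  | t :: ts, S =>
    (S.powersetCard t.size).biUnion fun A =>
      (labellings t A ×ˢ forestLabellings ts (S \ A)).image fun p => p.1 :: p.2
end

mutual
theorem mem_labellings : ∀ (t : RTree) (S : Finset ℕ) (l : LRTree),
    l ∈ labellings t S ↔ l.shape = t ∧ l.labels = S.val ∧ l.Increasing
  | .node ts, S, .node a ls => by
    rw [shape_node, labels_node, increasing_node_iff, node.injEq, eq_comm (b := S.val), labellings]
    split_ifs with h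
    · simp only [Finset.mem_image, mem_forestLabellings ts, LRTree.node.injEq]
      constructor
      · rintro ⟨_, ⟨hsh, hlab, hinc⟩, rfl, rfl⟩
        obtain ⟨hS, hlt⟩ := Finset.val_eq_cons_and_lt_iff.2 ⟨h, rfl, hlab.symm⟩
        exact ⟨hsh, hS, hlt, hinc⟩
      · rintro ⟨hsh, hS, hlt, hinc⟩
        obtain ⟨_, rfl, hlab⟩ := Finset.val_eq_cons_and_lt_iff.1 ⟨hS, hlt⟩
        exact ⟨ls, ⟨hsh, hlab.symm, hinc⟩, rfl, rfl⟩
    · simp only [Finset.notMem_empty, false_iff]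
      rintro ⟨-, hS, hlt, -⟩
      exact h (Finset.val_eq_cons_and_lt_iff.1 ⟨hS, hlt⟩).1

theorem mem_forestLabellings : ∀ (ts : List RTree) (S : Finset ℕ) (ls : List LRTree),
    ls ∈ forestLabellings ts S ↔
      ls.map shape = ts ∧ (ls.map labels).sum = S.val ∧ ∀ l ∈ ls, l.Increasing
  | [], S, [] => by
    rw [forestLabellings]
    split_ifs with h <;> simp [h, eq_comm (a := (0 : Multiset ℕ))]
  | [], S, l :: ls => by
    rw [forestLabellings]
    split_ifs <;> simp
  | t :: ts, S, [] => by simp [forestLabellings]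
  | t :: ts, S, l :: ls => by
    simp only [forestLabellings, Finset.mem_biUnion, Finset.mem_image, Finset.mem_product,
      Prod.exists, List.cons.injEq, mem_labellings t, mem_forestLabellings ts,
      List.map_cons, List.sum_cons, List.forall_mem_cons, Finset.mem_powersetCard]
    constructor
    · rintro ⟨A, ⟨hAS, -⟩, _, _, ⟨⟨hsh, hA, hinc⟩, hsh', hSA, hinc'⟩, rfl, rfl⟩
      exact ⟨⟨hsh, hsh'⟩, (Finset.val_eq_add_iff.2 ⟨A, hAS, hA.symm, hSA.symm⟩).symm, hinc, hinc'⟩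
    · rintro ⟨⟨hsh, hsh'⟩, hS, hinc, hinc'⟩
      obtain ⟨A, hAS, hA, hSA⟩ := Finset.val_eq_add_iff.1 hS.symm
      have hcard : A.card = t.size := by rw [← hsh, ← card_labels, ← hA, Finset.card_val]
      exact ⟨A, ⟨hAS, hcard⟩, l, ls, ⟨⟨hsh, hA.symm, hinc⟩, hsh', hSA.symm, hinc'⟩, rfl, rfl⟩
end

theorem pairwiseDisjoint_forestLabellings_cons (t : RTree) (ts : List RTree) (S : Finset ℕ) :
    (S.powersetCard t.size : Set (Finset ℕ)).PairwiseDisjoint fun A =>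
      (labellings t A ×ˢ forestLabellings ts (S \ A)).image fun p => p.1 :: p.2 := by
  intro A _ B _ hAB
  refine Finset.disjoint_left.2 fun x hxA hxB => hAB ?_
  simp only [Finset.mem_image, Finset.mem_product, mem_labellings] at hxA hxB
  obtain ⟨⟨l, _⟩, ⟨⟨-, hA, -⟩, -⟩, rfl⟩ := hxA
  obtain ⟨⟨l', _⟩, ⟨⟨-, hB, -⟩, -⟩, hx⟩ := hxB
  obtain ⟨rfl, -⟩ := List.cons.inj hx
  exact Finset.val_injective (hA.symm.trans hB)

mutual
theorem card_labellings_mul_hookProd : ∀ (t : RTree) (S : Finset ℕ), S.card = t.size →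
    (labellings t S).card * t.hookProd = t.size !
  | .node ts, S, hS => by
    rw [size_node] at hS
    have hne : S.Nonempty := Finset.card_pos.1 (by omega)
    have herase : (S.erase (S.min' hne)).card = (ts.map size).sum := by
      rw [Finset.card_erase_of_mem (S.min'_mem hne)]; omega
    rw [labellings, dif_pos hne,
      Finset.card_image_of_injective _ fun _ _ h => (LRTree.node.inj h).2, hookProd_node,
      size_node, add_comm 1, Nat.factorial_succ,
      ← card_forestLabellings_mul_prod_hookProd ts _ herase]
    ring

theorem card_forestLabellings_mul_prod_hookProd : ∀ (ts : List RTree) (S : Finset ℕ),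
    S.card = (ts.map size).sum → (forestLabellings ts S).card * (ts.map hookProd).prod =
      (ts.map size).sum !
  | [], S, hS => by
    rw [forestLabellings, if_pos (Finset.card_eq_zero.1 hS)]
    simp
  | t :: ts, S, hS => by
    simp only [List.map_cons, List.sum_cons, List.prod_cons] at hS ⊢
    have hterm : ∀ A ∈ S.powersetCard t.size,
        ((labellings t A ×ˢ forestLabellings ts (S \ A)).image fun p => p.1 :: p.2).card *
          (t.hookProd * (ts.map hookProd).prod) = t.size ! * (ts.map size).sum ! := by
      intro A hA
      obtain ⟨hAS, hAcard⟩ := Finset.mem_powersetCard.1 hA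
      have hSA : (S \ A).card = (ts.map size).sum := by
        rw [Finset.card_sdiff_of_subset hAS]; omega
      rw [Finset.card_image_of_injective _ List.cons_uncurry_injective, Finset.card_product,
        ← card_labellings_mul_hookProd t A hAcard,
        ← card_forestLabellings_mul_prod_hookProd ts _ hSA]
      ring
    rw [forestLabellings, Finset.card_biUnion (pairwiseDisjoint_forestLabellings_cons t ts S),
      Finset.sum_mul, Finset.sum_congr rfl hterm, Finset.sum_const, Finset.card_powersetCard,
      smul_eq_mul, hS, ← mul_assoc, choose_symm_add, add_choose_mul_factorial_mul_factorial]
end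

end RTree

/-- Hook length formula: for every rooted tree `t` with `n` vertices, the number of
increasing labellings of `t` by `{1, …, n}` equals `n !` divided by the product of the
hook lengths of its vertices. -/
theorem hook_length_formula (t : RTree) :
    {l : LRTree | l.shape = t ∧
        l.labels = Multiset.map (· + 1) (Multiset.range t.size) ∧
        l.Increasing}.ncard * t.hookProd = Nat.factorial t.size := by
  let S : Finset ℕ :=
    ⟨(Multiset.range t.size).map (· + 1), (Multiset.nodup_range _).map (add_left_injective 1)⟩
  have hS : S.card = t.size := by simp [S]
  have hset : {l : LRTree | l.shape = t ∧
      l.labels = Multiset.map (· + 1) (Multiset.range t.size) ∧ l.Increasing} =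
      t.labellings S :=
    Set.ext fun l => (t.mem_labellings S l).symm
  rw [hset, Set.ncard_coe_finset, t.card_labellings_mul_hookProd S hS]
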